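/- arXiv:1809.09783 — 2 statements merged into one kernel-verified Lean document; each statement's English description precedes it below -/
import Mathlib

section
/- Let Υ : [t₀, ∞) → ℝ be a nonnegative C¹ function satisfying α·Υ'(t) + λ·Υ(t) + S·Υ(t)² ≤ C for all t ≥ t₀, where α, λ, S, C > 0. Then limsup_{t→∞} Υ(t) ≤ (√(λ² + 4SC) − λ)/(2S). -/
open Filter Real Set

/-!
Write `Ῡ` for the positive root of `S x² + λ x = C`. Whenever `Υ t ≥ Ῡ + ε`, the differential
inequality gives `α Υ' ≤ C - λ Υ - S Υ² ≤ -λ ε`, so above the level `Ῡ + ε` the function decreases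
at a uniform rate. Being bounded below, `Υ` must reach that level, and it can never cross it
upwards afterwards. Hence `limsup Υ ≤ Ῡ + ε` for every `ε > 0`.
-/

section Barrier

variable {f f' : ℝ → ℝ} {t₀ M : ℝ}

theorem exists_le_of_hasDerivAt_le_neg {m δ : ℝ} (hδ : 0 < δ)
    (hf : ∀ t ∈ Ici t₀, HasDerivAt f (f' t) t) (hbdd : ∀ t ∈ Ici t₀, m ≤ f t)
    (hder : ∀ t ∈ Ici t₀, M ≤ f t → f' t ≤ -δ) :
    ∃ t ∈ Ici t₀, f t ≤ M := by
  by_contra! habove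
  set T := t₀ + (f t₀ - m + 1) / δ
  have hT : t₀ ≤ T :=
    le_add_of_nonneg_right (div_nonneg (by linarith [hbdd t₀ self_mem_Ici]) hδ.le)
  have hIco : Ico t₀ T ⊆ Ici t₀ := Ico_subset_Icc_self.trans Icc_subset_Ici_self
  have hlinear : f T ≤ f t₀ - δ * (T - t₀) :=
    image_le_of_deriv_right_le_deriv_boundary (B := fun t => f t₀ - δ * (t - t₀))
      (fun t ht => (hf t (Icc_subset_Ici_self ht)).continuousAt.continuousWithinAt)
      (fun t ht => (hf t (hIco ht)).hasDerivWithinAt) (by simp) (by fun_prop)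
      (fun t _ => by
        simpa using (((hasDerivAt_id t).sub_const t₀).const_mul δ).const_sub (f t₀)
          |>.hasDerivWithinAt)
      (fun t ht => hder t (hIco ht) (habove t (hIco ht)).le) (right_mem_Icc.2 hT)
  have hδT : δ * (T - t₀) = f t₀ - m + 1 := by
    simp only [T, add_sub_cancel_left, mul_div_cancel₀ _ hδ.ne']
  linarith [hbdd T hT]

theorem le_of_hasDerivAt_neg_of_eq (hf : ∀ t ∈ Ici t₀, HasDerivAt f (f' t) t) (h₀ : f t₀ ≤ M)
    (hder : ∀ t ∈ Ici t₀, f t = M → f' t < 0) :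
    ∀ t ∈ Ici t₀, f t ≤ M := fun t ht =>
  have hIcc : Icc t₀ t ⊆ Ici t₀ := Icc_subset_Ici_self
  image_le_of_deriv_right_lt_deriv_boundary (B := fun _ => M) (B' := fun _ => 0)
    (fun s hs => (hf s (hIcc hs)).continuousAt.continuousWithinAt)
    (fun s hs => (hf s (hIcc (Ico_subset_Icc_self hs))).hasDerivWithinAt) h₀
    (fun _ => hasDerivAt_const _ M) (fun s hs => hder s (hIcc (Ico_subset_Icc_self hs)))
    (right_mem_Icc.2 ht)

theorem eventually_le_of_hasDerivAt_le_neg {m δ : ℝ} (hδ : 0 < δ)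
    (hf : ∀ t ∈ Ici t₀, HasDerivAt f (f' t) t) (hbdd : ∀ t ∈ Ici t₀, m ≤ f t)
    (hder : ∀ t ∈ Ici t₀, M ≤ f t → f' t ≤ -δ) :
    ∀ᶠ t in atTop, f t ≤ M := by
  obtain ⟨t₁, ht₁, hft₁⟩ := exists_le_of_hasDerivAt_le_neg hδ hf hbdd hder
  have hsub : Ici t₁ ⊆ Ici t₀ := Ici_subset_Ici.2 ht₁
  filter_upwards [eventually_ge_atTop t₁] with t ht
  refine le_of_hasDerivAt_neg_of_eq (fun s hs => hf s (hsub hs)) hft₁ (fun s hs hfs => ?_) t ht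
  linarith [hder s (hsub hs) hfs.ge]

end Barrier

/-- The nonnegative root of `a x² + b x = c` when `a > 0` and `c ≥ 0`. -/
noncomputable def posRoot (a b c : ℝ) : ℝ := (√(b ^ 2 + 4 * a * c) - b) / (2 * a)

section PosRoot

variable {a b c : ℝ}

theorem posRoot_nonneg (ha : 0 < a) (hc : 0 ≤ c) : 0 ≤ posRoot a b c := by
  refine div_nonneg (sub_nonneg.2 ?_) (by positivity)
  calc b ≤ |b| := le_abs_self b
    _ = √(b ^ 2) := (sqrt_sq_eq_abs b).symm
    _ ≤ √(b ^ 2 + 4 * a * c) := sqrt_le_sqrt (by nlinarith)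

theorem posRoot_spec (ha : a ≠ 0) (hdisc : 0 ≤ b ^ 2 + 4 * a * c) :
    a * posRoot a b c ^ 2 + b * posRoot a b c = c := by
  have hsq := sq_sqrt hdisc
  unfold posRoot
  set s := √(b ^ 2 + 4 * a * c)
  field_simp
  linear_combination hsq

end PosRoot

theorem stmt_0_general (α lam S C t₀ : ℝ) (hα : 0 < α) (hlam : 0 < lam) (hS : 0 < S) (hC : 0 < C)
    (Υ : ℝ → ℝ) (hΥdiff : ∀ t ∈ Set.Ici t₀, HasDerivAt Υ (deriv Υ t) t)
    (hΥnonneg : ∀ t ∈ Set.Ici t₀, 0 ≤ Υ t)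
    (hineq : ∀ t ∈ Set.Ici t₀, α * deriv Υ t + lam * Υ t + S * (Υ t)^2 ≤ C) :
    limsup Υ atTop ≤ (Real.sqrt (lam^2 + 4*S*C) - lam) / (2*S) := by
  change limsup Υ atTop ≤ posRoot S lam C
  have hroot_nonneg := posRoot_nonneg (b := lam) hS hC.le
  have hroot := posRoot_spec hS.ne' (by positivity : 0 ≤ lam ^ 2 + 4 * S * C)
  have hcobdd : IsCoboundedUnder (· ≤ ·) atTop Υ :=
    isCoboundedUnder_le_of_eventually_le atTop (x := 0)
      (eventually_ge_atTop t₀ |>.mono hΥnonneg)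
  refine le_of_forall_pos_le_add fun ε hε => limsup_le_of_le hcobdd ?_
  refine eventually_le_of_hasDerivAt_le_neg (δ := lam * ε / α) (by positivity)
    hΥdiff hΥnonneg fun t ht hle => ?_
  have hquad : S * posRoot S lam C ^ 2 ≤ S * Υ t ^ 2 := by gcongr; linarith
  rw [← neg_div, le_div_iff₀ hα]
  nlinarith [hineq t ht]

theorem stmt_0 (α lam S C t₀ : ℝ) (hα : 0 < α) (hlam : 0 < lam) (hS : 0 < S) (hC : 0 < C)
    (Υ : ℝ → ℝ) (hΥdiff : ∀ t ∈ Set.Ici t₀, HasDerivAt Υ (deriv Υ t) t)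
    (hΥcont : ContinuousOn (deriv Υ) (Set.Ici t₀))
    (hΥnonneg : ∀ t ∈ Set.Ici t₀, 0 ≤ Υ t)
    (hineq : ∀ t ∈ Set.Ici t₀, α * deriv Υ t + lam * Υ t + S * (Υ t)^2 ≤ C) :
    limsup Υ atTop ≤ (Real.sqrt (lam^2 + 4*S*C) - lam) / (2*S) :=
  stmt_0_general α lam S C t₀ hα hlam hS hC Υ hΥdiff hΥnonneg hineq
end

section
/- Let f : (m², ∞) → ℝ be defined on each maximal subinterval where tan(ℓ√(s − m²)) is finite by f(s) = ((s + c)/(s − c))² · tanh(ℓ√(s+m²))/√(s+m²) − tan(ℓ√(s−m²))/√(s−m²), where c = (1−σ)m² with 0 < σ < 1 and m, ℓ > 0. Then on the interval (m², m² + π²/(4ℓ²)), if lim_{s→m²⁺} f(s) > 0 (which holds iff tanh(√2·mℓ) > (σ/(2−σ))²·√2·mℓ), the function f is strictly decreasing and tends to −∞ as s approaches m² + π²/(4ℓ²) from below; hence f has exactly one zero in that interval. -/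
/-!
Write `f = T - U` with `T s = ((s + c) / (s - c))² · tanh (ℓ √(s + m²)) / √(s + m²)` and
`U s = tan (ℓ √(s - m²)) / √(s - m²)`. Since `tanh` is strictly concave on `[0, ∞)` and `tan` is
strictly convex on `[0, π/2)`, the secant slopes `tanh x / x` and `tan x / x` are strictly
decreasing resp. increasing; after the substitution `x = ℓ √(s ± m²)` this makes `T` strictly
decreasing and `U` strictly increasing on `(m², m² + π²/(4ℓ²))`, on which `ℓ √(s - m²)` ranges
over `(0, π/2)`. At the left end `U → ℓ` because `tan x / x → 1`, so `f → T m² - ℓ`, which is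
positive exactly under the hypothesis on `tanh (√2 m ℓ)`; at the right end `ℓ √(s - m²) → π/2`,
so `U → ∞`. The intermediate value theorem and strict monotonicity give the unique zero.
-/

open Real Set Filter Topology

namespace Real

lemma hasDerivAt_tanh (x : ℝ) : HasDerivAt tanh (1 / cosh x ^ 2) x := by
  have h := (hasDerivAt_sinh x).div (hasDerivAt_cosh x) (cosh_pos x).ne'
  rwa [← sq, ← sq, cosh_sq_sub_sinh_sq, show sinh / cosh = tanh from
    (funext tanh_eq_sinh_div_cosh).symm] at h

lemma continuous_tanh : Continuous tanh :=
  continuous_iff_continuousAt.2 fun x => (hasDerivAt_tanh x).continuousAt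

lemma tanh_pos {x : ℝ} (hx : 0 < x) : 0 < tanh x := by
  rw [tanh_eq_sinh_div_cosh]
  exact div_pos (sinh_pos_iff.2 hx) (cosh_pos x)

lemma strictConcaveOn_tanh : StrictConcaveOn ℝ (Ici 0) tanh := by
  refine StrictAntiOn.strictConcaveOn_of_deriv (convex_Ici 0) continuous_tanh.continuousOn ?_
  rw [interior_Ici]
  intro x hx y hy hxy
  rw [(hasDerivAt_tanh x).deriv, (hasDerivAt_tanh y).deriv]
  have hcosh : cosh x < cosh y := by
    rwa [cosh_lt_cosh, abs_of_pos hx, abs_of_pos hy]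
  gcongr

lemma strictAntiOn_tanh_div_self : StrictAntiOn (fun x => tanh x / x) (Ioi 0) := by
  intro x hx y hy hxy
  simpa [tanh_zero] using strictConcaveOn_tanh.secant_strict_mono self_mem_Ici
    (mem_Ici.2 (le_of_lt hx)) (mem_Ici.2 (le_of_lt hy)) (ne_of_gt hx) (ne_of_gt hy) hxy

lemma strictConvexOn_tan : StrictConvexOn ℝ (Ico 0 (π / 2)) tan := by
  have hcos : ∀ x ∈ Ico 0 (π / 2), 0 < cos x := fun x hx =>
    cos_pos_of_mem_Ioo ⟨by linarith [pi_pos, hx.1], hx.2⟩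
  refine StrictMonoOn.strictConvexOn_of_deriv (convex_Ico _ _)
    (fun x hx => (continuousAt_tan.2 (hcos x hx).ne').continuousWithinAt) ?_
  rw [interior_Ico]
  intro x hx y hy hxy
  rw [deriv_tan, deriv_tan]
  have hcos_lt : cos y < cos x := strictAntiOn_cos ⟨hx.1.le, by linarith [hx.2, pi_pos]⟩
    ⟨hy.1.le, by linarith [hy.2, pi_pos]⟩ hxy
  have hcos_pos := hcos y (Ioo_subset_Ico_self hy)
  gcongr

lemma strictMonoOn_tan_div_self : StrictMonoOn (fun x => tan x / x) (Ioo 0 (π / 2)) := by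
  intro x hx y hy hxy
  simpa [tan_zero] using strictConvexOn_tan.secant_strict_mono ⟨le_rfl, by linarith [pi_pos]⟩
    (Ioo_subset_Ico_self hx) (Ioo_subset_Ico_self hy) (ne_of_gt hx.1) (ne_of_gt hy.1) hxy

lemma tendsto_tan_div_self : Tendsto (fun x => tan x / x) (𝓝[≠] 0) (𝓝 1) := by
  have h := hasDerivAt_iff_tendsto_slope.1 (hasDerivAt_tan (x := 0) (by simp))
  rw [cos_zero, one_pow, div_one] at h
  exact h.congr fun x => by simp [slope_def_field]

end Real

noncomputable def tanhTerm (c a ℓ s : ℝ) : ℝ :=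
  ((s + c) / (s - c)) ^ 2 * tanh (ℓ * √(s + a)) / √(s + a)

noncomputable def tanTerm (a ℓ s : ℝ) : ℝ := tan (ℓ * √(s - a)) / √(s - a)

lemma div_eq_mul_div_mul_left {G₀ : Type*} [CommGroupWithZero G₀] (x t : G₀) {ℓ : G₀}
    (hℓ : ℓ ≠ 0) : x / t = ℓ * (x / (ℓ * t)) := by
  rw [mul_div_assoc', mul_div_mul_left _ _ hℓ]

section tanhTerm

variable {c a ℓ : ℝ}

lemma strictAntiOn_tanhTerm (hc : 0 < c) (hac : -a ≤ c) (hℓ : 0 < ℓ) :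
    StrictAntiOn (tanhTerm c a ℓ) (Ioi c) := by
  intro s (hs : c < s) t (ht : c < t) hst
  have hsa : 0 < √(s + a) := sqrt_pos.2 (by linarith)
  have hlt : ℓ * √(s + a) < ℓ * √(t + a) :=
    mul_lt_mul_of_pos_left (sqrt_lt_sqrt (by linarith) (by linarith)) hℓ
  have hratio : (t + c) / (t - c) < (s + c) / (s - c) := by
    rw [div_lt_div_iff₀ (by linarith) (by linarith)]
    nlinarith
  have htanh : tanh (ℓ * √(t + a)) / √(t + a) < tanh (ℓ * √(s + a)) / √(s + a) := by
    rw [div_eq_mul_div_mul_left _ _ hℓ.ne', div_eq_mul_div_mul_left _ (√(s + a)) hℓ.ne']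
    exact mul_lt_mul_of_pos_left (strictAntiOn_tanh_div_self (mul_pos hℓ hsa)
      ((mul_pos hℓ hsa).trans hlt) hlt) hℓ
  unfold tanhTerm
  rw [mul_div_assoc, mul_div_assoc]
  have htanh_pos := tanh_pos ((mul_pos hℓ hsa).trans hlt)
  exact mul_lt_mul'' (pow_lt_pow_left₀ hratio (div_pos (by linarith) (by linarith)).le two_ne_zero)
    htanh (by positivity) (by positivity)

lemma continuousAt_tanhTerm {s : ℝ} (hs : s ≠ c) (ha : 0 < s + a) :
    ContinuousAt (tanhTerm c a ℓ) s := by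
  have hsqrt : ContinuousAt (fun s => √(s + a)) s := by fun_prop
  exact ((((continuousAt_id.add continuousAt_const).div (continuousAt_id.sub continuousAt_const)
    (sub_ne_zero.2 hs)).pow 2).mul (continuous_tanh.continuousAt.comp
      (continuousAt_const.mul hsqrt))).div hsqrt (sqrt_pos.2 ha).ne'

lemma lt_tanhTerm_iff {σ m : ℝ} (hσ : 0 < σ) (hσ2 : σ < 2) (hm : 0 < m) :
    ℓ < tanhTerm ((1 - σ) * m ^ 2) (m ^ 2) ℓ (m ^ 2) ↔
      (σ / (2 - σ)) ^ 2 * (√2 * m * ℓ) < tanh (√2 * m * ℓ) := by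
  have hsqrt : √(m ^ 2 + m ^ 2) = √2 * m := by
    rw [← two_mul, sqrt_mul zero_le_two, sqrt_sq hm.le]
  have hratio : (m ^ 2 + (1 - σ) * m ^ 2) / (m ^ 2 - (1 - σ) * m ^ 2) = (σ / (2 - σ))⁻¹ := by
    rw [inv_div, show m ^ 2 - (1 - σ) * m ^ 2 = σ * m ^ 2 by ring,
      div_eq_div_iff (by positivity) hσ.ne']
    ring
  unfold tanhTerm
  rw [hsqrt, hratio, inv_pow, show ℓ * (√2 * m) = √2 * m * ℓ by ring,
    lt_div_iff₀' (by positivity), lt_inv_mul_iff₀ (by positivity)]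

end tanhTerm

section tanTerm

variable {a ℓ : ℝ}

lemma mul_sqrt_pi_sq_div (hℓ : 0 < ℓ) : ℓ * √(π ^ 2 / (4 * ℓ ^ 2)) = π / 2 := by
  rw [show π ^ 2 / (4 * ℓ ^ 2) = (π / (2 * ℓ)) ^ 2 by ring, sqrt_sq (by positivity)]
  field_simp

lemma mapsTo_mul_sqrt_sub (hℓ : 0 < ℓ) :
    MapsTo (fun s => ℓ * √(s - a)) (Ioo a (a + π ^ 2 / (4 * ℓ ^ 2))) (Ioo 0 (π / 2)) := by
  intro s ⟨has, hsb⟩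
  refine ⟨mul_pos hℓ (sqrt_pos.2 (by linarith)), ?_⟩
  rw [← mul_sqrt_pi_sq_div hℓ]
  exact mul_lt_mul_of_pos_left (sqrt_lt_sqrt (by linarith) (by linarith)) hℓ

lemma tanTerm_eq (hℓ : ℓ ≠ 0) (s : ℝ) :
    tanTerm a ℓ s = ℓ * (tan (ℓ * √(s - a)) / (ℓ * √(s - a))) :=
  div_eq_mul_div_mul_left _ _ hℓ

lemma strictMonoOn_tanTerm (hℓ : 0 < ℓ) :
    StrictMonoOn (tanTerm a ℓ) (Ioo a (a + π ^ 2 / (4 * ℓ ^ 2))) := by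
  intro s hs t ht hst
  rw [tanTerm_eq hℓ.ne', tanTerm_eq hℓ.ne']
  exact mul_lt_mul_of_pos_left (strictMonoOn_tan_div_self (mapsTo_mul_sqrt_sub hℓ hs)
    (mapsTo_mul_sqrt_sub hℓ ht)
    (mul_lt_mul_of_pos_left (sqrt_lt_sqrt (by linarith [hs.1]) (by linarith)) hℓ)) hℓ

lemma continuousOn_tanTerm (hℓ : 0 < ℓ) :
    ContinuousOn (tanTerm a ℓ) (Ioo a (a + π ^ 2 / (4 * ℓ ^ 2))) := by
  have htan : ContinuousOn (fun s => tan (ℓ * √(s - a))) (Ioo a (a + π ^ 2 / (4 * ℓ ^ 2))) :=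
    continuousOn_tan_Ioo.comp (by fun_prop) fun s hs =>
      Ioo_subset_Ioo (by linarith [pi_pos]) le_rfl (mapsTo_mul_sqrt_sub hℓ hs)
  exact htan.div (by fun_prop) fun s hs => (sqrt_pos.2 (sub_pos.2 hs.1)).ne'

lemma tendsto_tanTerm_nhdsGT (hℓ : 0 < ℓ) : Tendsto (tanTerm a ℓ) (𝓝[>] a) (𝓝 ℓ) := by
  have hu : Tendsto (fun s => ℓ * √(s - a)) (𝓝[>] a) (𝓝[≠] 0) := by
    refine tendsto_nhdsWithin_iff.2 ⟨?_, ?_⟩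
    · have h : ContinuousAt (fun s => ℓ * √(s - a)) a := by fun_prop
      simpa using h.tendsto.mono_left nhdsWithin_le_nhds
    · filter_upwards [self_mem_nhdsWithin] with s (hs : a < s)
      exact (mul_pos hℓ (sqrt_pos.2 (sub_pos.2 hs))).ne'
  have h := (tendsto_tan_div_self.comp hu).const_mul ℓ
  rw [mul_one] at h
  exact h.congr fun s => (tanTerm_eq hℓ.ne' s).symm

lemma tendsto_tanTerm_nhdsLT (hℓ : 0 < ℓ) :
    Tendsto (tanTerm a ℓ) (𝓝[<] (a + π ^ 2 / (4 * ℓ ^ 2))) atTop := by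
  set b := a + π ^ 2 / (4 * ℓ ^ 2)
  have hab : a < b := by simp only [b]; linarith [show 0 < π ^ 2 / (4 * ℓ ^ 2) by positivity]
  have hu : Tendsto (fun s => ℓ * √(s - a)) (𝓝[<] b) (𝓝[<] (π / 2)) := by
    refine tendsto_nhdsWithin_iff.2 ⟨?_, ?_⟩
    · have h : ContinuousAt (fun s => ℓ * √(s - a)) b := by fun_prop
      simpa [b, mul_sqrt_pi_sq_div hℓ] using h.tendsto.mono_left nhdsWithin_le_nhds
    · filter_upwards [Ioo_mem_nhdsLT hab] with s hs
      exact (mapsTo_mul_sqrt_sub hℓ hs).2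
  have hinv : Tendsto (fun s => (√(s - a))⁻¹) (𝓝[<] b) (𝓝 (√(b - a))⁻¹) := by
    have h : ContinuousAt (fun s => (√(s - a))⁻¹) b :=
      (continuous_sqrt.continuousAt.comp (by fun_prop)).inv₀ (sqrt_pos.2 (sub_pos.2 hab)).ne'
    exact h.tendsto.mono_left nhdsWithin_le_nhds
  exact (tendsto_tan_pi_div_two.comp hu).atTop_mul_pos
    (inv_pos.2 (sqrt_pos.2 (sub_pos.2 hab))) hinv

end tanTerm

theorem stmt_9 (σ m ℓ : ℝ) (hσ : 0 < σ) (hσ1 : σ < 1) (hm : 1 ≤ m) (hℓ : 0 < ℓ)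
    (c : ℝ) (hc : c = (1-σ)*m^2)
    (f : ℝ → ℝ)
    (hf : ∀ s, f s = ((s+c)/(s-c))^2 * Real.tanh (ℓ*Real.sqrt (s+m^2))/Real.sqrt (s+m^2)
                      - Real.tan (ℓ*Real.sqrt (s-m^2))/Real.sqrt (s-m^2))
    (hlim : Real.tanh (Real.sqrt 2 * m * ℓ) > (σ/(2-σ))^2 * (Real.sqrt 2 * m * ℓ)) :
    StrictAntiOn f (Set.Ioo (m^2) (m^2 + Real.pi^2/(4*ℓ^2))) ∧
    Filter.Tendsto f
      (nhdsWithin (m^2 + Real.pi^2/(4*ℓ^2)) (Set.Iio (m^2 + Real.pi^2/(4*ℓ^2))))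
      Filter.atBot ∧
    (∃! s, s ∈ Set.Ioo (m^2) (m^2 + Real.pi^2/(4*ℓ^2)) ∧ f s = 0) := by
  have hfeq : f = tanhTerm c (m ^ 2) ℓ - tanTerm (m ^ 2) ℓ := funext hf
  subst hfeq
  have hm0 : 0 < m := by linarith
  have hc0 : 0 < c := hc ▸ mul_pos (by linarith) (by positivity)
  have hcm : c < m ^ 2 := by rw [hc]; nlinarith [mul_pos hσ (pow_pos hm0 2)]
  set b := m ^ 2 + π ^ 2 / (4 * ℓ ^ 2)
  have hmb : m ^ 2 < b := by simp only [b]; linarith [show 0 < π ^ 2 / (4 * ℓ ^ 2) by positivity]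
  have hsub : Ioo (m ^ 2) b ⊆ Ioi c := fun s hs => hcm.trans hs.1
  have hanti : StrictAntiOn (tanhTerm c (m ^ 2) ℓ - tanTerm (m ^ 2) ℓ) (Ioo (m ^ 2) b) :=
    fun s hs t ht hst =>
      sub_lt_sub (strictAntiOn_tanhTerm hc0 (by linarith) hℓ (hsub hs) (hsub ht) hst)
        (strictMonoOn_tanTerm hℓ hs ht hst)
  have hbot : Tendsto (tanhTerm c (m ^ 2) ℓ - tanTerm (m ^ 2) ℓ) (𝓝[<] b) atBot :=
    (((continuousAt_tanhTerm (hcm.trans hmb).ne' (by positivity)).tendsto.mono_left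
      nhdsWithin_le_nhds).add_atBot (tendsto_neg_atBot_iff.2 (tendsto_tanTerm_nhdsLT hℓ))).congr
      fun s => (sub_eq_add_neg _ _).symm
  have hcont : ContinuousOn (tanhTerm c (m ^ 2) ℓ - tanTerm (m ^ 2) ℓ) (Ioo (m ^ 2) b) :=
    (continuousOn_of_forall_continuousAt fun s hs =>
      continuousAt_tanhTerm (hsub hs).ne' (by linarith [hs.1])).sub
      (continuousOn_tanTerm hℓ)
  have hnhds : Tendsto (tanhTerm c (m ^ 2) ℓ - tanTerm (m ^ 2) ℓ) (𝓝[>] (m ^ 2))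
      (𝓝 (tanhTerm c (m ^ 2) ℓ (m ^ 2) - ℓ)) :=
    ((continuousAt_tanhTerm hcm.ne' (by positivity)).tendsto.mono_left
      nhdsWithin_le_nhds).sub (tendsto_tanTerm_nhdsGT hℓ)
  have hpos : 0 < tanhTerm c (m ^ 2) ℓ (m ^ 2) - ℓ := by
    rw [sub_pos, hc, lt_tanhTerm_iff hσ (by linarith) hm0]
    exact hlim
  obtain ⟨s, hs, hs0⟩ := isPreconnected_Ioo.intermediate_value_Iio
    (le_principal_iff.2 (Ioo_mem_nhdsLT hmb)) (le_principal_iff.2 (Ioo_mem_nhdsGT hmb))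
    hcont hbot hnhds hpos
  exact ⟨hanti, hbot, s, ⟨hs, hs0⟩, fun t ht => hanti.injOn ht.1 hs (ht.2.trans hs0.symm)⟩
end
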